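/- Let n be even, z ∈ I^fpf_n, and w ∈ S_n. Then w is an fpf-atom of z if and only if both: (1) for every pair a < b with z(a) = b, there is an i with w(a) = 2i−1 and w(b) = 2i; and (2) for all pairs a < b = z(a) and c < d = z(c) with a < c and b < d, one has w(b) < w(c). -/

import Mathlib

open Equiv

/-- The simple transposition `s_a` of `Fin n` (swapping `a` and `a+1`, `0`-indexed);
the identity when `a` is out of range. -/
def sTr (n : ℕ) (a : ℕ) : Equiv.Perm (Fin n) :=
  if h : a + 1 < n then Equiv.swap ⟨a, Nat.lt_of_succ_lt h⟩ ⟨a + 1, h⟩ else 1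

/-- The product `s_{a_1} s_{a_2} ⋯ s_{a_l}` of the simple transpositions in a word. -/
def wordProd (n : ℕ) (l : List ℕ) : Equiv.Perm (Fin n) :=
  (l.map (sTr n)).prod

/-- A word whose letters are all valid indices of simple transpositions of `S_n`. -/
def IsWord (n : ℕ) (l : List ℕ) : Prop := ∀ a ∈ l, a + 1 < n

/-- The Coxeter length of a permutation: the minimal length of a word in the simple
transpositions expressing it. -/
noncomputable def len (n : ℕ) (w : Equiv.Perm (Fin n)) : ℕ :=
  sInf {k | ∃ l : List ℕ, IsWord n l ∧ wordProd n l = w ∧ l.length = k}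

/-- `l` is a reduced word for `w`: a minimal-length word with product `w`. -/
def IsReducedWord (n : ℕ) (l : List ℕ) (w : Equiv.Perm (Fin n)) : Prop :=
  IsWord n l ∧ wordProd n l = w ∧
    ∀ l' : List ℕ, IsWord n l' → wordProd n l' = w → l.length ≤ l'.length

/-- One step of the Demazure (0-Hecke) product: `u ∘ s_a = u s_a` if the length
increases, and `u` otherwise. -/
noncomputable def demStep (n : ℕ) (u : Equiv.Perm (Fin n)) (a : ℕ) : Equiv.Perm (Fin n) :=
  if len n (u * sTr n a) = len n u + 1 then u * sTr n a else u

/-- The Demazure product `s_{a_1} ∘ s_{a_2} ∘ ⋯ ∘ s_{a_l}` of a word. -/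
noncomputable def demWord (n : ℕ) (l : List ℕ) : Equiv.Perm (Fin n) :=
  l.foldl (demStep n) 1

/-- A choice of reduced word for each permutation. -/
noncomputable def redWord (n : ℕ) (w : Equiv.Perm (Fin n)) : List ℕ := by
  classical
  exact if h : ∃ l, IsReducedWord n l w then h.choose else []

/-- The Demazure product `v ∘ w` of two permutations: the Demazure product of the
concatenation of reduced words for `v` and for `w`. -/
noncomputable def dem (n : ℕ) (v w : Equiv.Perm (Fin n)) : Equiv.Perm (Fin n) :=
  demWord n (redWord n v ++ redWord n w)

/-- `s_{a_l} ∘ ⋯ ∘ s_{a_1} ∘ 1 ∘ s_{a_1} ∘ ⋯ ∘ s_{a_l}`, the involution-word product. -/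
noncomputable def invWordProd (n : ℕ) (l : List ℕ) : Equiv.Perm (Fin n) :=
  demWord n (l.reverse ++ l)

/-- `l` is an involution word for `y`: a minimal-length word with
`y = s_{a_l} ∘ ⋯ ∘ s_{a_1} ∘ 1 ∘ s_{a_1} ∘ ⋯ ∘ s_{a_l}`. -/
def IsInvWord (n : ℕ) (l : List ℕ) (y : Equiv.Perm (Fin n)) : Prop :=
  IsWord n l ∧ invWordProd n l = y ∧
    ∀ l' : List ℕ, IsWord n l' → invWordProd n l' = y → l.length ≤ l'.length

/-- `w` is an atom for `y`: a minimal-length permutation with `y = w⁻¹ ∘ w`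
(Demazure product). -/
def IsAtomOf (n : ℕ) (w y : Equiv.Perm (Fin n)) : Prop :=
  dem n w⁻¹ w = y ∧ ∀ v : Equiv.Perm (Fin n), dem n v⁻¹ v = y → len n w ≤ len n v

/-- The word `1, 3, 5, …, (n-1)` (in `1`-indexed terms), i.e. `0,2,4,…` `0`-indexed. -/
def fpfBase (n : ℕ) : List ℕ := (List.range (n / 2)).map (fun i => 2 * i)

/-- The minimal fixed-point-free involution `1^fpf_n = s_1 s_3 ⋯ s_{n-1}`. -/
def onefpf (n : ℕ) : Equiv.Perm (Fin n) := wordProd n (fpfBase n)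

/-- `s_{a_l} ⋯ s_{a_1} · 1^fpf_n · s_{a_1} ⋯ s_{a_l}` (ordinary products). -/
def conjWordProd (n : ℕ) (l : List ℕ) : Equiv.Perm (Fin n) :=
  wordProd n l.reverse * onefpf n * wordProd n l

/-- `l` is an fpf-involution word for `z`. -/
def IsFpfInvWord (n : ℕ) (l : List ℕ) (z : Equiv.Perm (Fin n)) : Prop :=
  IsWord n l ∧ conjWordProd n l = z ∧
    ∀ l' : List ℕ, IsWord n l' → conjWordProd n l' = z → l.length ≤ l'.length

/-- `w` is an fpf-atom for `z`: a minimal-length permutation with `z = w⁻¹ · 1^fpf_n · w`. -/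
def IsFpfAtomOf (n : ℕ) (w z : Equiv.Perm (Fin n)) : Prop :=
  w⁻¹ * onefpf n * w = z ∧
    ∀ v : Equiv.Perm (Fin n), v⁻¹ * onefpf n * v = z → len n w ≤ len n v

/-- Bruhat order on `S_n`: generated by `u < u t` for transpositions `t` that
increase length. -/
def BruhatLE (n : ℕ) (u w : Equiv.Perm (Fin n)) : Prop :=
  Relation.ReflTransGen
    (fun x y => len n x < len n y ∧ ∃ t : Equiv.Perm (Fin n), Equiv.Perm.IsSwap t ∧ y = x * t)
    u w

/-- The Rothe diagram `D(w) = {(i,j) : w(i) > j, w⁻¹(j) > i}` (`0`-indexed). -/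
def rothe (n : ℕ) (w : Equiv.Perm (Fin n)) : Finset (Fin n × Fin n) :=
  Finset.univ.filter (fun p => p.2 < w p.1 ∧ p.1 < w⁻¹ p.2)

/-- The number of inversions of a permutation. -/
def invNum (n : ℕ) (w : Equiv.Perm (Fin n)) : ℕ :=
  (Finset.univ.filter (fun p : Fin n × Fin n => p.1 < p.2 ∧ w p.2 < w p.1)).card

/-- The transpose of a finite diagram. -/
def trFinset (n : ℕ) (D : Finset (Fin n × Fin n)) : Finset (Fin n × Fin n) :=
  D.image (fun p => (p.2, p.1))

/-- The transpose of a diagram (as a set). -/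
def trSet {n : ℕ} (D : Set (Fin n × Fin n)) : Set (Fin n × Fin n) :=
  {p | (p.2, p.1) ∈ D}

/-- The northwest partial order: `(i,j) ≤ (i',j')` iff `i ≤ i'` and `j ≤ j'`. -/
def NWle {n : ℕ} (p q : Fin n × Fin n) : Prop := p.1 ≤ q.1 ∧ p.2 ≤ q.2

/-- A lower set for the northwest order (i.e., a Ferrers/partition diagram). -/
def IsLowerNW {n : ℕ} (S : Set (Fin n × Fin n)) : Prop :=
  ∀ p q : Fin n × Fin n, NWle p q → q ∈ S → p ∈ S

/-- The dominant component of a diagram: the union of all `≤_NW`-lower sets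
contained in it. -/
def domComp {n : ℕ} (D : Set (Fin n × Fin n)) : Set (Fin n × Fin n) :=
  ⋃₀ {S | IsLowerNW S ∧ S ⊆ D}

/-- The Lehmer code `c_i(w)`: the number of cells of the Rothe diagram in row `i`. -/
def code (n : ℕ) (w : Equiv.Perm (Fin n)) (i : Fin n) : ℕ :=
  (Finset.univ.filter (fun j : Fin n => (i, j) ∈ rothe n w)).card

/-- The involution code `ĉ_i(y)`: the number of `j > i` with `y(i) > y(j)` and
`i ≥ y(j)` (`0`-indexed translation of the `1`-indexed definition). -/
def invCode (n : ℕ) (y : Equiv.Perm (Fin n)) (i : Fin n) : ℕ :=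
  (Finset.univ.filter (fun j : Fin n => i < j ∧ y j < y i ∧ y j ≤ i)).card

/-- The fpf-involution code `ĉ^fpf_i(z)`: the number of `j > i` with `z(i) > z(j)`
and `i > z(j)`. -/
def fpfInvCode (n : ℕ) (z : Equiv.Perm (Fin n)) (i : Fin n) : ℕ :=
  (Finset.univ.filter (fun j : Fin n => i < j ∧ z j < z i ∧ z j < i)).card

/-- The word `b_1 a_1 b_2 a_2 ⋯ b_l a_l` with repeated letters removed, where
`a_1 < ⋯ < a_l` are the `a` with `a ≤ y(a)` and `b_i = y(a_i)`; this is the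
one-line notation of `α_min(y)⁻¹`. -/
def amWord (n : ℕ) (y : Equiv.Perm (Fin n)) : List (Fin n) :=
  (((List.finRange n).filter (fun a => a ≤ y a)).flatMap (fun a => [y a, a])).dedup

/-- The standard reading word of a diagram: read rows top to bottom, each row right
to left, recording the (`0`-indexed) antidiagonal index `i+j` of each cell. -/
def readWord (n : ℕ) (D : Finset (Fin n × Fin n)) : List ℕ :=
  (List.finRange n).flatMap (fun i =>
    ((List.finRange n).reverse.filter (fun j => (i, j) ∈ D)).map
      (fun j => (i : ℕ) + (j : ℕ)))

/-- `D` is a reduced pipe dream for `w`: a subset of the staircase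
`{(i,j) : i + j ≤ n}` (`1`-indexed) whose standard reading word is a reduced word
for `w`. -/
def IsPipeDream (n : ℕ) (D : Finset (Fin n × Fin n)) (w : Equiv.Perm (Fin n)) : Prop :=
  (∀ p ∈ D, (p.1 : ℕ) + (p.2 : ℕ) + 2 ≤ n) ∧ IsReducedWord n (readWord n D) w

theorem Equiv.Perm.apply_inv_self {α : Type*} (f : Perm α) (x : α) : f (f⁻¹ x) = x :=
  Equiv.apply_symm_apply f x

theorem Equiv.Perm.inv_apply_self {α : Type*} (f : Perm α) (x : α) : f⁻¹ (f x) = x :=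
  Equiv.symm_apply_apply f x

namespace FpfAux


lemma swap_val (n c : ℕ) (h : c + 1 < n) (x : Fin n) :
    ((Equiv.swap ⟨c, Nat.lt_of_succ_lt h⟩ ⟨c + 1, h⟩ : Perm (Fin n)) x : ℕ) =
      if (x : ℕ) = c then c + 1 else if (x : ℕ) = c + 1 then c else x := by
  rw [Equiv.swap_apply_def]
  split_ifs with h1 h2 h3 h4 h5 <;> simp_all [Fin.ext_iff]

/-- Core lemma: multiplying on the left by an adjacent transposition whose
entries appear in increasing position order adds exactly one inversion. -/
lemma invNum_swap_mul_of_lt (n c : ℕ) (h : c + 1 < n) (w : Perm (Fin n))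
    (hw : w⁻¹ ⟨c, Nat.lt_of_succ_lt h⟩ < w⁻¹ ⟨c + 1, h⟩) :
    invNum n (Equiv.swap ⟨c, Nat.lt_of_succ_lt h⟩ ⟨c + 1, h⟩ * w) = invNum n w + 1 := by
  set c1 : Fin n := ⟨c, Nat.lt_of_succ_lt h⟩ with hc1
  set c2 : Fin n := ⟨c + 1, h⟩ with hc2
  set s : Perm (Fin n) := Equiv.swap c1 c2 with hs
  set P : Fin n × Fin n := (w⁻¹ c1, w⁻¹ c2) with hP
  have key : (Finset.univ.filter
      (fun p : Fin n × Fin n => p.1 < p.2 ∧ (s * w) p.2 < (s * w) p.1)) =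
      insert P (Finset.univ.filter (fun p : Fin n × Fin n => p.1 < p.2 ∧ w p.2 < w p.1)) := by
    ext p
    simp only [Finset.mem_filter, Finset.mem_univ, true_and, Finset.mem_insert]
    simp only [Perm.mul_apply]
    have e1 : w p.1 = c1 ↔ p.1 = w⁻¹ c1 := (Equiv.Perm.eq_inv_iff_eq).symm
    have e2 : w p.2 = c2 ↔ p.2 = w⁻¹ c2 := (Equiv.Perm.eq_inv_iff_eq).symm
    have e1' : w p.1 = c2 ↔ p.1 = w⁻¹ c2 := (Equiv.Perm.eq_inv_iff_eq).symm
    have e2' : w p.2 = c1 ↔ p.2 = w⁻¹ c1 := (Equiv.Perm.eq_inv_iff_eq).symm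
    have ePP : p = P ↔ ((w p.1 : ℕ) = c ∧ (w p.2 : ℕ) = c + 1) := by
      rw [Prod.ext_iff, ← e1, ← e2]
      constructor
      · rintro ⟨ha, hb⟩; exact ⟨by rw [ha], by rw [hb]⟩
      · rintro ⟨ha, hb⟩; exact ⟨Fin.ext ha, Fin.ext hb⟩
    constructor
    · rintro ⟨hlt, hsv⟩
      have hne : ((w p.1 : Fin n) : ℕ) ≠ ((w p.2 : Fin n) : ℕ) := fun hh =>
        absurd (w.injective (Fin.ext hh)) (ne_of_lt hlt)
      have hv : ((s (w p.2)) : ℕ) < ((s (w p.1)) : ℕ) := hsv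
      rw [swap_val n c h, swap_val n c h] at hv
      by_cases hPp : p = P
      · exact Or.inl hPp
      · right
        refine ⟨hlt, Fin.lt_def.2 ?_⟩
        have hP' : ¬((w p.1 : ℕ) = c ∧ (w p.2 : ℕ) = c + 1) := fun hh => hPp (ePP.2 hh)
        split_ifs at hv <;> omega
    · rintro (rfl | ⟨hlt, hv⟩)
      · refine ⟨hw, ?_⟩
        show s (w P.2) < s (w P.1)
        simp only [hP, Perm.apply_inv_self, hs, Equiv.swap_apply_left, Equiv.swap_apply_right]
        exact Fin.lt_def.2 (Nat.lt_succ_self c)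
      · refine ⟨hlt, ?_⟩
        have hv' : ((w p.2 : Fin n) : ℕ) < ((w p.1 : Fin n) : ℕ) := hv
        by_cases hx : (w p.2 : ℕ) = c ∧ (w p.1 : ℕ) = c + 1
        · exfalso
          have h1 : p.2 = w⁻¹ c1 := e2'.1 (Fin.ext hx.1)
          have h2 : p.1 = w⁻¹ c2 := e1'.1 (Fin.ext hx.2)
          rw [h1, h2] at hlt
          exact absurd hw (not_lt.2 hlt.le)
        · show ((s (w p.2)) : ℕ) < ((s (w p.1)) : ℕ)
          rw [swap_val n c h, swap_val n c h]
          split_ifs <;> omega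
  have hPnot : P ∉ (Finset.univ.filter
      (fun p : Fin n × Fin n => p.1 < p.2 ∧ w p.2 < w p.1)) := by
    simp only [Finset.mem_filter, Finset.mem_univ, true_and, hP, not_and]
    intro _
    rw [Perm.apply_inv_self, Perm.apply_inv_self]
    exact fun hh => absurd hh (by rw [hc1, hc2, Fin.lt_def]; simp)
  rw [invNum, invNum, key, Finset.card_insert_of_notMem hPnot]

lemma invNum_swap_mul_of_gt (n c : ℕ) (h : c + 1 < n) (w : Perm (Fin n))
    (hw : w⁻¹ ⟨c + 1, h⟩ < w⁻¹ ⟨c, Nat.lt_of_succ_lt h⟩) :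
    invNum n (Equiv.swap ⟨c, Nat.lt_of_succ_lt h⟩ ⟨c + 1, h⟩ * w) + 1 = invNum n w := by
  set c1 : Fin n := ⟨c, Nat.lt_of_succ_lt h⟩
  set c2 : Fin n := ⟨c + 1, h⟩
  set s : Perm (Fin n) := Equiv.swap c1 c2 with hs
  have h1 : (s * w)⁻¹ c1 < (s * w)⁻¹ c2 := by
    simp only [mul_inv_rev, Perm.mul_apply]
    rw [hs, Equiv.swap_inv, Equiv.swap_apply_left, Equiv.swap_apply_right]
    exact hw
  have := invNum_swap_mul_of_lt n c h (s * w) h1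
  rw [← mul_assoc, hs, Equiv.swap_mul_self, one_mul] at this
  rw [hs]
  exact this.symm



lemma invNum_one (n : ℕ) : invNum n 1 = 0 := by
  rw [invNum, Finset.card_eq_zero, Finset.filter_eq_empty_iff]
  rintro ⟨p1, p2⟩ -
  simp only [Perm.one_apply, not_and]
  intro h h'
  exact absurd h' (not_lt.2 h.le)

/-- A strictly monotone permutation is the identity. -/
lemma eq_one_of_strictMono (n : ℕ) (w : Perm (Fin n)) (hmono : StrictMono ⇑w) : w = 1 := by
  have hinv : StrictMono ⇑w⁻¹ := by
    intro a b hab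
    rcases lt_trichotomy (w⁻¹ a) (w⁻¹ b) with h' | h' | h'
    · exact h'
    · exact absurd (w⁻¹.injective h') (ne_of_lt hab)
    · have := hmono h'
      simp only [Perm.apply_inv_self] at this
      exact absurd hab (not_lt.2 this.le)
  ext x
  have : WellFoundedLT (Fin n) := inferInstance
  have h1 : x ≤ w x := StrictMono.le_apply hmono
  have h2 : w x ≤ w⁻¹ (w x) := StrictMono.le_apply hinv
  simp only [Perm.inv_apply_self] at h2
  simp [le_antisymm h2 h1]



lemma wordProd_nil (n : ℕ) : wordProd n [] = 1 := rfl

lemma wordProd_cons (n : ℕ) (a : ℕ) (l : List ℕ) :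
    wordProd n (a :: l) = sTr n a * wordProd n l := by
  simp [wordProd]

lemma wordProd_append (n : ℕ) (l1 l2 : List ℕ) :
    wordProd n (l1 ++ l2) = wordProd n l1 * wordProd n l2 := by
  simp [wordProd]

lemma invNum_sTr_mul_le (n a : ℕ) (w : Perm (Fin n)) :
    invNum n (sTr n a * w) ≤ invNum n w + 1 := by
  rw [sTr]
  split_ifs with h
  · rcases lt_trichotomy (w⁻¹ ⟨a, Nat.lt_of_succ_lt h⟩) (w⁻¹ ⟨a + 1, h⟩) with h' | h' | h'
    · rw [invNum_swap_mul_of_lt n a h w h']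
    · exact absurd (w⁻¹.injective h') (by simp [Fin.ext_iff])
    · rw [← invNum_swap_mul_of_gt n a h w h']; omega
  · simp

lemma invNum_wordProd_le (n : ℕ) (l : List ℕ) : invNum n (wordProd n l) ≤ l.length := by
  induction l with
  | nil => simp [wordProd_nil, invNum_one]
  | cons a l ih =>
    rw [wordProd_cons]
    calc invNum n (sTr n a * wordProd n l) ≤ invNum n (wordProd n l) + 1 :=
          invNum_sTr_mul_le n a (wordProd n l)
    _ ≤ l.length + 1 := by omega
    _ = (a :: l).length := by simp

lemma exists_descent (n : ℕ) (w : Perm (Fin n)) (hw : w ≠ 1) :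
    ∃ c, ∃ (h : c + 1 < n), w⁻¹ ⟨c + 1, h⟩ < w⁻¹ ⟨c, Nat.lt_of_succ_lt h⟩ := by
  by_contra hc
  push_neg at hc
  apply hw
  have hmono : StrictMono ⇑w⁻¹ := by
    cases n with
    | zero => intro x; exact absurd x.2 (by omega)
    | succ m =>
      rw [Fin.strictMono_iff_lt_succ]
      intro i
      have h : (i : ℕ) + 1 < m + 1 := by omega
      have := hc i h
      have hne : w⁻¹ ⟨(i : ℕ) + 1, h⟩ ≠ w⁻¹ ⟨(i : ℕ), Nat.lt_of_succ_lt h⟩ :=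
        fun hh => by simpa [Fin.ext_iff] using w⁻¹.injective hh
      have hlt : w⁻¹ ⟨(i : ℕ), Nat.lt_of_succ_lt h⟩ < w⁻¹ ⟨(i : ℕ) + 1, h⟩ :=
        lt_of_le_of_ne this hne.symm
      have e1 : i.castSucc = (⟨(i : ℕ), Nat.lt_of_succ_lt h⟩ : Fin (m + 1)) := by
        simp [Fin.ext_iff]
      have e2 : i.succ = (⟨(i : ℕ) + 1, h⟩ : Fin (m + 1)) := by
        simp [Fin.ext_iff]
      rw [e1, e2]
      exact hlt
  have : w⁻¹ = 1 := eq_one_of_strictMono n w⁻¹ hmono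
  simpa using congrArg (·⁻¹) this

lemma exists_word (n : ℕ) : ∀ N (w : Perm (Fin n)), invNum n w = N →
    ∃ l, IsWord n l ∧ wordProd n l = w ∧ l.length = N := by
  intro N
  induction N using Nat.strong_induction_on with
  | _ N ih =>
    intro w hw
    by_cases h1 : w = 1
    · subst h1
      rw [invNum_one] at hw
      exact ⟨[], fun a ha => absurd ha (List.not_mem_nil (a := a)), wordProd_nil n, by simp [← hw]⟩
    · obtain ⟨c, h, hd⟩ := exists_descent n w h1
      have hstep := invNum_swap_mul_of_gt n c h w hd
      set s : Perm (Fin n) := Equiv.swap ⟨c, Nat.lt_of_succ_lt h⟩ ⟨c + 1, h⟩ with hs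
      have hN : invNum n (s * w) + 1 = N := by rw [← hw]; exact hstep
      obtain ⟨l, hl, hp, hlen⟩ := ih (invNum n (s * w)) (by omega) (s * w) rfl
      refine ⟨c :: l, ?_, ?_, ?_⟩
      · intro a ha
        rcases List.mem_cons.1 ha with rfl | ha'
        · exact h
        · exact hl a ha'
      · rw [wordProd_cons, hp, sTr, dif_pos h, ← hs, ← mul_assoc, hs,
          Equiv.swap_mul_self, one_mul]
      · simp [hlen]; omega

lemma len_eq_invNum (n : ℕ) (w : Perm (Fin n)) : len n w = invNum n w := by
  obtain ⟨l, hl, hp, hlen⟩ := exists_word n (invNum n w) w rfl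
  apply le_antisymm
  · exact Nat.sInf_le ⟨l, hl, hp, hlen⟩
  · have hne : {k | ∃ l : List ℕ, IsWord n l ∧ wordProd n l = w ∧ l.length = k}.Nonempty :=
      ⟨invNum n w, l, hl, hp, hlen⟩
    apply le_csInf hne
    rintro k ⟨l', hl', hp', rfl⟩
    calc invNum n w = invNum n (wordProd n l') := by rw [hp']
    _ ≤ l'.length := invNum_wordProd_le n l'



lemma wordProd_base (n : ℕ) : ∀ m, 2 * m ≤ n → ∀ x : Fin n,
    ((wordProd n ((List.range m).map (fun i => 2 * i)) x : Fin n) : ℕ) =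
      if (x : ℕ) < 2 * m then (if (x : ℕ) % 2 = 0 then (x : ℕ) + 1 else (x : ℕ) - 1)
      else x := by
  intro m
  induction m with
  | zero =>
    intro _ x
    simp [wordProd]
  | succ m ih =>
    intro hm x
    rw [List.range_succ, List.map_append, wordProd_append]
    have h2m : 2 * m + 1 < n := by omega
    have hsTr : sTr n (2 * m) = Equiv.swap ⟨2 * m, Nat.lt_of_succ_lt h2m⟩ ⟨2 * m + 1, h2m⟩ :=
      dif_pos h2m
    have hW : wordProd n ([m].map (fun i => 2 * i)) =
        Equiv.swap ⟨2 * m, Nat.lt_of_succ_lt h2m⟩ ⟨2 * m + 1, h2m⟩ := by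
      simp [wordProd, hsTr.symm]
    rw [hW, Perm.mul_apply]
    set y := Equiv.swap (⟨2 * m, Nat.lt_of_succ_lt h2m⟩ : Fin n) ⟨2 * m + 1, h2m⟩ x with hy
    have hyv : (y : ℕ) = if (x : ℕ) = 2 * m then 2 * m + 1
        else if (x : ℕ) = 2 * m + 1 then 2 * m else x := swap_val n (2 * m) h2m x
    have := ih (by omega) y
    rw [this, hyv]
    have hx : (x : ℕ) < n := x.2
    split_ifs <;> omega

lemma onefpf_apply (n : ℕ) (hn : Even n) (x : Fin n) :
    ((onefpf n x : Fin n) : ℕ) =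
      if (x : ℕ) % 2 = 0 then (x : ℕ) + 1 else (x : ℕ) - 1 := by
  have h2 : n % 2 = 0 := Nat.even_iff.1 hn
  have h : 2 * (n / 2) = n := by omega
  have := wordProd_base n (n / 2) (by omega) x
  rw [onefpf, fpfBase]
  rw [this, h]
  have hx : (x : ℕ) < n := x.2
  split_ifs <;> omega



/-- Pointwise form of the conjugation condition `v⁻¹ ∘ 1fpf ∘ v = z`. -/
def Conj (n : ℕ) (z v : Perm (Fin n)) : Prop := ∀ x, v (z x) = onefpf n (v x)

/-- Orientation correctness: each cycle start maps to an even value. -/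
def Orient (n : ℕ) (z v : Perm (Fin n)) : Prop :=
  ∀ x : Fin n, x < z x → (v x : ℕ) % 2 = 0

/-- No violations of the crossing condition. -/
def NoViol (n : ℕ) (z v : Perm (Fin n)) : Prop :=
  ∀ a b c d : Fin n, a < b → z a = b → c < d → z c = d → a < c → b < d → v b < v c

lemma conj_iff (n : ℕ) (z v : Perm (Fin n)) :
    v⁻¹ * onefpf n * v = z ↔ Conj n z v := by
  constructor
  · intro h x
    have : (v * z) x = (onefpf n * v) x := by
      rw [← h]
      simp only [mul_assoc, Perm.mul_apply, Perm.apply_inv_self]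
    simpa [Perm.mul_apply] using this
  · intro h
    have : onefpf n * v = v * z := Equiv.ext fun x => by
      simp only [Perm.mul_apply]; exact (h x).symm
    calc v⁻¹ * onefpf n * v = v⁻¹ * (onefpf n * v) := by rw [mul_assoc]
    _ = v⁻¹ * (v * z) := by rw [this]
    _ = z := by simp [← mul_assoc]

lemma z_invol (n : ℕ) (hn : Even n) (z v : Perm (Fin n)) (hc : Conj n z v) (x : Fin n) :
    z (z x) = x := by
  apply v.injective
  rw [hc (z x), hc x]
  apply Fin.ext
  rw [onefpf_apply n hn, onefpf_apply n hn]
  have h1 : ((v x : Fin n) : ℕ) < n := (v x).2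
  have h2 : n % 2 = 0 := Nat.even_iff.1 hn
  split_ifs <;> omega

/-- Under `Conj` and `Orient`, each cycle start has an even value and its
partner the succeeding odd value. -/
lemma cycle_block (n : ℕ) (hn : Even n) (z v : Perm (Fin n)) (hc : Conj n z v)
    (x : Fin n) (hx : x < z x) (he : (v x : ℕ) % 2 = 0) :
    (v (z x) : ℕ) = (v x : ℕ) + 1 := by
  rw [hc x]
  rw [onefpf_apply n hn, if_pos he]

lemma swap_pair_comm_onefpf (n c : ℕ) (hn : Even n) (hc : c % 2 = 0) (h : c + 1 < n)
    (u : Fin n) :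
    Equiv.swap ⟨c, Nat.lt_of_succ_lt h⟩ ⟨c + 1, h⟩ (onefpf n u) =
      onefpf n (Equiv.swap ⟨c, Nat.lt_of_succ_lt h⟩ ⟨c + 1, h⟩ u) := by
  apply Fin.ext
  rw [swap_val n c h, onefpf_apply n hn, onefpf_apply n hn, swap_val n c h]
  have h1 : (u : ℕ) < n := u.2
  have h2 : n % 2 = 0 := Nat.even_iff.1 hn
  split_ifs <;> omega

lemma move_orient (n : ℕ) (hn : Even n) (z v : Perm (Fin n)) (hconj : Conj n z v)
    (x : Fin n) (hx : x < z x) (hodd : (v x : ℕ) % 2 = 1) :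
    ∃ v', Conj n z v' ∧ invNum n v' < invNum n v := by
  set c : ℕ := (v x : ℕ) - 1 with hcdef
  have hvx : (v x : ℕ) = c + 1 := by omega
  have h : c + 1 < n := by rw [← hvx]; exact (v x).2
  have hceven : c % 2 = 0 := by omega
  set s : Perm (Fin n) := Equiv.swap ⟨c, Nat.lt_of_succ_lt h⟩ ⟨c + 1, h⟩ with hs
  have hvzx : (v (z x) : ℕ) = c := by
    rw [hconj x, onefpf_apply n hn, if_neg (by omega)]
  refine ⟨s * v, ?_, ?_⟩
  · intro u
    simp only [Perm.mul_apply]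
    rw [hconj u, hs]
    exact swap_pair_comm_onefpf n c hn hceven h (v u)
  · have hi1 : v⁻¹ ⟨c + 1, h⟩ = x := by
      apply v.injective; rw [Perm.apply_inv_self]; exact (Fin.ext hvx).symm
    have hi2 : v⁻¹ ⟨c, Nat.lt_of_succ_lt h⟩ = z x := by
      apply v.injective; rw [Perm.apply_inv_self]; exact (Fin.ext hvzx).symm
    have := invNum_swap_mul_of_gt n c h v (by rw [hi1, hi2]; exact hx)
    rw [hs]
    omega



/-- The permutation exchanging the value blocks `{2k, 2k+1}` and `{2k+2, 2k+3}`
(order-preservingly), as a product of four adjacent transpositions. -/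
def tSwap (n k : ℕ) : Perm (Fin n) :=
  sTr n (2 * k + 1) * sTr n (2 * k) * sTr n (2 * k + 2) * sTr n (2 * k + 1)

set_option maxHeartbeats 1000000 in
lemma tSwap_val (n k : ℕ) (h : 2 * k + 3 < n) (u : Fin n) :
    ((tSwap n k u : Fin n) : ℕ) =
      if (u : ℕ) = 2 * k then 2 * k + 2
      else if (u : ℕ) = 2 * k + 1 then 2 * k + 3
      else if (u : ℕ) = 2 * k + 2 then 2 * k
      else if (u : ℕ) = 2 * k + 3 then 2 * k + 1
      else u := by
  have hb1 : 2 * k + 1 + 1 < n := by omega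
  have hb0 : 2 * k + 1 < n := by omega
  have h2 : 2 * k + 2 + 1 < n := by omega
  have hs1 : sTr n (2 * k + 1) =
      Equiv.swap ⟨2 * k + 1, Nat.lt_of_succ_lt hb1⟩ ⟨2 * k + 1 + 1, hb1⟩ := dif_pos hb1
  have hs0 : sTr n (2 * k) =
      Equiv.swap ⟨2 * k, Nat.lt_of_succ_lt hb0⟩ ⟨2 * k + 1, hb0⟩ := dif_pos hb0
  have hs2 : sTr n (2 * k + 2) =
      Equiv.swap ⟨2 * k + 2, Nat.lt_of_succ_lt h2⟩ ⟨2 * k + 2 + 1, h2⟩ := dif_pos h2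
  rw [tSwap]
  simp only [Perm.mul_apply]
  rw [hs1, hs0, hs2]
  rw [swap_val n (2 * k + 1) hb1, swap_val n (2 * k) hb0, swap_val n (2 * k + 2) h2,
    swap_val n (2 * k + 1) hb1]
  have := u.2
  split_ifs <;> omega

set_option maxHeartbeats 2000000 in
lemma tSwap_comm_onefpf (n k : ℕ) (hn : Even n) (h : 2 * k + 3 < n) (u : Fin n) :
    tSwap n k (onefpf n u) = onefpf n (tSwap n k u) := by
  apply Fin.ext
  rw [tSwap_val n k h, onefpf_apply n hn, onefpf_apply n hn, tSwap_val n k h]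
  have := u.2
  have h2 : n % 2 = 0 := Nat.even_iff.1 hn
  split_ifs <;> omega

set_option maxHeartbeats 2000000 in
lemma tSwap_parity (n k : ℕ) (h : 2 * k + 3 < n) (u : Fin n) :
    ((tSwap n k u : Fin n) : ℕ) % 2 = (u : ℕ) % 2 := by
  rw [tSwap_val n k h]
  split_ifs <;> omega

set_option maxHeartbeats 2000000 in
lemma tSwap_lt_of_lt (n k : ℕ) (h : 2 * k + 3 < n) (u1 u2 : Fin n) (hlt : u1 < u2)
    (hno : ¬((u1 : ℕ) / 2 = k ∧ (u2 : ℕ) / 2 = k + 1)) :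
    tSwap n k u1 < tSwap n k u2 := by
  have hv : (u1 : ℕ) < (u2 : ℕ) := hlt
  apply Fin.lt_def.2
  rw [tSwap_val n k h, tSwap_val n k h]
  split_ifs <;> omega

/-- The key computation: exchanging adjacent value blocks strictly decreases the
inversion number if the block positions are "comparable" (out of order), and
preserves it if the two cycles are nested. -/
lemma tSwap_spec (n k : ℕ) (h : 2 * k + 3 < n) (v : Perm (Fin n)) (q1 q2 p1 p2 : Fin n)
    (hvq1 : (v q1 : ℕ) = 2 * k) (hvq2 : (v q2 : ℕ) = 2 * k + 1)
    (hvp1 : (v p1 : ℕ) = 2 * k + 2) (hvp2 : (v p2 : ℕ) = 2 * k + 3)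
    (hq : q1 < q2) (hp : p1 < p2) :
    ((p1 < q1 ∧ p2 < q2) → invNum n (tSwap n k * v) < invNum n v) ∧
    ((q1 < p1 ∧ p2 < q2) ∨ (p1 < q1 ∧ q2 < p2) → invNum n (tSwap n k * v) = invNum n v) := by
  have hb1 : 2 * k + 1 + 1 < n := by omega
  have hb0 : 2 * k + 1 < n := by omega
  have h2 : 2 * k + 2 + 1 < n := by omega
  set s1 : Perm (Fin n) :=
    Equiv.swap ⟨2 * k + 1, Nat.lt_of_succ_lt hb1⟩ ⟨2 * k + 1 + 1, hb1⟩ with hs1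
  set s0 : Perm (Fin n) :=
    Equiv.swap ⟨2 * k, Nat.lt_of_succ_lt hb0⟩ ⟨2 * k + 1, hb0⟩ with hs0
  set s2 : Perm (Fin n) :=
    Equiv.swap ⟨2 * k + 2, Nat.lt_of_succ_lt h2⟩ ⟨2 * k + 2 + 1, h2⟩ with hs2
  set w1 : Perm (Fin n) := s1 * v with hw1
  set w2 : Perm (Fin n) := s2 * w1 with hw2
  set w3 : Perm (Fin n) := s0 * w2 with hw3
  set w4 : Perm (Fin n) := s1 * w3 with hw4
  have ht : tSwap n k * v = w4 := by
    have e1 : sTr n (2 * k + 1) = s1 := dif_pos hb1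
    have e0 : sTr n (2 * k) = s0 := dif_pos hb0
    have e2 : sTr n (2 * k + 2) = s2 := dif_pos h2
    rw [tSwap, e1, e0, e2, hw4, hw3, hw2, hw1]
    simp only [mul_assoc]
  -- positions of the relevant values in v, w1, w2, w3
  have i1 : v⁻¹ (⟨2 * k + 1 + 1, hb1⟩ : Fin n) = p1 := by
    rw [Perm.inv_eq_iff_eq]; apply Fin.ext; show 2 * k + 1 + 1 = ((v p1 : Fin n) : ℕ); omega
  have i2 : v⁻¹ (⟨2 * k + 1, Nat.lt_of_succ_lt hb1⟩ : Fin n) = q2 := by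
    rw [Perm.inv_eq_iff_eq]; apply Fin.ext; show 2 * k + 1 = ((v q2 : Fin n) : ℕ); omega
  have j1 : w1⁻¹ (⟨2 * k + 2 + 1, h2⟩ : Fin n) = p2 := by
    rw [Perm.inv_eq_iff_eq]; apply Fin.ext
    show 2 * k + 2 + 1 = ((w1 p2 : Fin n) : ℕ)
    rw [hw1]; simp only [Perm.mul_apply]; rw [hs1, swap_val n (2 * k + 1) hb1]
    split_ifs <;> omega
  have j2 : w1⁻¹ (⟨2 * k + 2, Nat.lt_of_succ_lt h2⟩ : Fin n) = q2 := by
    rw [Perm.inv_eq_iff_eq]; apply Fin.ext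
    show 2 * k + 2 = ((w1 q2 : Fin n) : ℕ)
    rw [hw1]; simp only [Perm.mul_apply]; rw [hs1, swap_val n (2 * k + 1) hb1]
    split_ifs <;> omega
  have l1 : w2⁻¹ (⟨2 * k + 1, hb0⟩ : Fin n) = p1 := by
    rw [Perm.inv_eq_iff_eq]; apply Fin.ext
    show 2 * k + 1 = ((w2 p1 : Fin n) : ℕ)
    rw [hw2, hw1]; simp only [Perm.mul_apply]
    rw [hs1, hs2, swap_val n (2 * k + 2) h2, swap_val n (2 * k + 1) hb1]
    split_ifs <;> omega
  have l2 : w2⁻¹ (⟨2 * k, Nat.lt_of_succ_lt hb0⟩ : Fin n) = q1 := by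
    rw [Perm.inv_eq_iff_eq]; apply Fin.ext
    show 2 * k = ((w2 q1 : Fin n) : ℕ)
    rw [hw2, hw1]; simp only [Perm.mul_apply]
    rw [hs1, hs2, swap_val n (2 * k + 2) h2, swap_val n (2 * k + 1) hb1]
    split_ifs <;> omega
  have m1 : w3⁻¹ (⟨2 * k + 1 + 1, hb1⟩ : Fin n) = p2 := by
    rw [Perm.inv_eq_iff_eq]; apply Fin.ext
    show 2 * k + 1 + 1 = ((w3 p2 : Fin n) : ℕ)
    rw [hw3, hw2, hw1]; simp only [Perm.mul_apply]
    rw [hs1, hs2, hs0, swap_val n (2 * k) hb0, swap_val n (2 * k + 2) h2,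
      swap_val n (2 * k + 1) hb1]
    split_ifs <;> omega
  have m2 : w3⁻¹ (⟨2 * k + 1, Nat.lt_of_succ_lt hb1⟩ : Fin n) = q1 := by
    rw [Perm.inv_eq_iff_eq]; apply Fin.ext
    show 2 * k + 1 = ((w3 q1 : Fin n) : ℕ)
    rw [hw3, hw2, hw1]; simp only [Perm.mul_apply]
    rw [hs1, hs2, hs0, swap_val n (2 * k) hb0, swap_val n (2 * k + 2) h2,
      swap_val n (2 * k + 1) hb1]
    split_ifs <;> omega
  -- convert hypotheses to ℕ
  have hqv : (q1 : ℕ) < (q2 : ℕ) := hq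
  have hpv : (p1 : ℕ) < (p2 : ℕ) := hp
  rw [ht]
  constructor
  · rintro ⟨ha1, ha2⟩
    have c1 : v⁻¹ (⟨2 * k + 1 + 1, hb1⟩ : Fin n) < v⁻¹ ⟨2 * k + 1, Nat.lt_of_succ_lt hb1⟩ := by
      rw [i1, i2]; exact lt_trans ha1 hq
    have e1 := invNum_swap_mul_of_gt n (2 * k + 1) hb1 v c1
    rw [← hs1, ← hw1] at e1
    have c2 : w1⁻¹ (⟨2 * k + 2 + 1, h2⟩ : Fin n) < w1⁻¹ ⟨2 * k + 2, Nat.lt_of_succ_lt h2⟩ := by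
      rw [j1, j2]; exact ha2
    have e2 := invNum_swap_mul_of_gt n (2 * k + 2) h2 w1 c2
    rw [← hs2, ← hw2] at e2
    have c3 : w2⁻¹ (⟨2 * k + 1, hb0⟩ : Fin n) < w2⁻¹ ⟨2 * k, Nat.lt_of_succ_lt hb0⟩ := by
      rw [l1, l2]; exact ha1
    have e3 := invNum_swap_mul_of_gt n (2 * k) hb0 w2 c3
    rw [← hs0, ← hw3] at e3
    have hne : q1 ≠ p2 := by
      intro e; rw [e] at hvq1; omega
    rcases lt_or_gt_of_ne hne with hqp | hqp
    · -- crossing : q1 < p2, step 4 ascends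
      have c4 : w3⁻¹ (⟨2 * k + 1, Nat.lt_of_succ_lt hb1⟩ : Fin n) <
          w3⁻¹ ⟨2 * k + 1 + 1, hb1⟩ := by
        rw [m1, m2]; exact hqp
      have e4 := invNum_swap_mul_of_lt n (2 * k + 1) hb1 w3 c4
      rw [← hs1, ← hw4] at e4
      omega
    · -- disjoint : p2 < q1, step 4 descends
      have c4 : w3⁻¹ (⟨2 * k + 1 + 1, hb1⟩ : Fin n) <
          w3⁻¹ ⟨2 * k + 1, Nat.lt_of_succ_lt hb1⟩ := by
        rw [m1, m2]; exact hqp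
      have e4 := invNum_swap_mul_of_gt n (2 * k + 1) hb1 w3 c4
      rw [← hs1, ← hw4] at e4
      omega
  · intro hcase
    have hp1q2 : p1 < q2 := by
      rcases hcase with ⟨hx1, hx2⟩ | ⟨hx1, hx2⟩
      · exact lt_trans hp hx2
      · exact lt_trans hx1 hq
    have c1 : v⁻¹ (⟨2 * k + 1 + 1, hb1⟩ : Fin n) < v⁻¹ ⟨2 * k + 1, Nat.lt_of_succ_lt hb1⟩ := by
      rw [i1, i2]; exact hp1q2
    have e1 := invNum_swap_mul_of_gt n (2 * k + 1) hb1 v c1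
    rw [← hs1, ← hw1] at e1
    rcases hcase with ⟨hx1, hx2⟩ | ⟨hx1, hx2⟩
    · -- nesting with p-cycle inside
      have c2 : w1⁻¹ (⟨2 * k + 2 + 1, h2⟩ : Fin n) < w1⁻¹ ⟨2 * k + 2, Nat.lt_of_succ_lt h2⟩ := by
        rw [j1, j2]; exact hx2
      have e2 := invNum_swap_mul_of_gt n (2 * k + 2) h2 w1 c2
      rw [← hs2, ← hw2] at e2
      have c3 : w2⁻¹ (⟨2 * k, Nat.lt_of_succ_lt hb0⟩ : Fin n) < w2⁻¹ ⟨2 * k + 1, hb0⟩ := by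
        rw [l1, l2]; exact hx1
      have e3 := invNum_swap_mul_of_lt n (2 * k) hb0 w2 c3
      rw [← hs0, ← hw3] at e3
      have c4 : w3⁻¹ (⟨2 * k + 1, Nat.lt_of_succ_lt hb1⟩ : Fin n) <
          w3⁻¹ ⟨2 * k + 1 + 1, hb1⟩ := by
        rw [m1, m2]; exact lt_trans hx1 hp
      have e4 := invNum_swap_mul_of_lt n (2 * k + 1) hb1 w3 c4
      rw [← hs1, ← hw4] at e4
      omega
    · -- nesting with q-cycle inside
      have c2 : w1⁻¹ (⟨2 * k + 2, Nat.lt_of_succ_lt h2⟩ : Fin n) < w1⁻¹ ⟨2 * k + 2 + 1, h2⟩ := by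
        rw [j1, j2]; exact hx2
      have e2 := invNum_swap_mul_of_lt n (2 * k + 2) h2 w1 c2
      rw [← hs2, ← hw2] at e2
      have c3 : w2⁻¹ (⟨2 * k + 1, hb0⟩ : Fin n) < w2⁻¹ ⟨2 * k, Nat.lt_of_succ_lt hb0⟩ := by
        rw [l1, l2]; exact hx1
      have e3 := invNum_swap_mul_of_gt n (2 * k) hb0 w2 c3
      rw [← hs0, ← hw3] at e3
      have c4 : w3⁻¹ (⟨2 * k + 1, Nat.lt_of_succ_lt hb1⟩ : Fin n) <
          w3⁻¹ ⟨2 * k + 1 + 1, hb1⟩ := by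
        rw [m1, m2]; exact lt_trans hq hx2
      have e4 := invNum_swap_mul_of_lt n (2 * k + 1) hb1 w3 c4
      rw [← hs1, ← hw4] at e4
      omega



lemma tSwap_conj (n k : ℕ) (hn : Even n) (h : 2 * k + 3 < n) (z v : Perm (Fin n))
    (hc : Conj n z v) : Conj n z (tSwap n k * v) := by
  intro x
  simp only [Perm.mul_apply]
  rw [hc x]
  exact tSwap_comm_onefpf n k hn h (v x)

lemma tSwap_orient (n k : ℕ) (hn : Even n) (h : 2 * k + 3 < n) (z v : Perm (Fin n))
    (ho : Orient n z v) : Orient n z (tSwap n k * v) := by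
  intro x hx
  simp only [Perm.mul_apply]
  rw [tSwap_parity n k h (v x)]
  exact ho x hx

lemma move_violation (n : ℕ) (hn : Even n) (z : Perm (Fin n)) :
    ∀ N (v : Perm (Fin n)), Conj n z v → Orient n z v →
    ∀ a b c d : Fin n, a < b → z a = b → c < d → z c = d → a < c → b < d →
      v c < v b → (v b : ℕ) - (v c : ℕ) = N →
    ∃ v', Conj n z v' ∧ invNum n v' < invNum n v := by
  intro N
  induction N using Nat.strong_induction_on with
  | _ N ih =>
    intro v hconj horient a b c d hab hzab hcd hzcd hac hbd hviol hN
    have haz : a < z a := by rw [hzab]; exact hab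
    have hcz : c < z c := by rw [hzcd]; exact hcd
    have hea : (v a : ℕ) % 2 = 0 := horient a haz
    have heb : (v b : ℕ) = (v a : ℕ) + 1 := by
      rw [← hzab]; exact cycle_block n hn z v hconj a haz hea
    have hec : (v c : ℕ) % 2 = 0 := horient c hcz
    have hed : (v d : ℕ) = (v c : ℕ) + 1 := by
      rw [← hzcd]; exact cycle_block n hn z v hconj c hcz hec
    set i := (v a : ℕ) / 2 with hi
    set j := (v c : ℕ) / 2 with hj
    have hva : (v a : ℕ) = 2 * i := by omega
    have hvc : (v c : ℕ) = 2 * j := by omega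
    have hviolv : (v c : ℕ) < (v b : ℕ) := hviol
    have hij : j < i := by
      have hji : j ≤ i := by omega
      rcases Nat.eq_or_lt_of_le hji with he | hlt
      · exfalso
        have : v a = v c := Fin.ext (by omega)
        exact absurd (v.injective this) (ne_of_lt hac)
      · exact hlt
    have hbound : 2 * i + 1 < n := by have := (v b).2; omega
    have h23 : 2 * j + 3 < n := by omega
    set p := v⁻¹ (⟨2 * j + 2, by omega⟩ : Fin n) with hpdef
    set q := v⁻¹ (⟨2 * j + 3, h23⟩ : Fin n) with hqdef
    have hvp : (v p : ℕ) = 2 * j + 2 := by rw [hpdef, Perm.apply_inv_self]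
    have hvq : (v q : ℕ) = 2 * j + 3 := by rw [hqdef, Perm.apply_inv_self]
    have hzpq : z p = q := by
      apply v.injective
      rw [hconj p]
      apply Fin.ext
      rw [onefpf_apply n hn]
      split_ifs <;> omega
    have hpq : p < q := by
      rcases lt_trichotomy p q with h' | h' | h'
      · exact h'
      · exfalso; rw [h'] at hvp; omega
      · exfalso
        have hzq : z q = p := by rw [← hzpq]; exact z_invol n hn z v hconj p
        have hqz : q < z q := by rw [hzq]; exact h'
        have := horient q hqz
        omega
    -- distinctness of positions
    have hpc : p ≠ c := fun e => by rw [e] at hvp; omega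
    have hqd : q ≠ d := fun e => by rw [e] at hvq; omega
    rcases lt_or_gt_of_ne hpc with h1 | h1
    · rcases lt_or_gt_of_ne hqd with h2 | h2
      · -- p < c and q < d : the two cycles are comparable, adjacent swap descends
        have spec := tSwap_spec n j h23 v c d p q hvc (by omega) hvp hvq hcd hpq
        exact ⟨tSwap n j * v, tSwap_conj n j hn h23 z v hconj, spec.1 ⟨h1, h2⟩⟩
      · -- p < c and d < q : nesting (j-cycle inside (j+1)-cycle); swap and recurse
        have hii : j + 1 < i := by
          rcases Nat.eq_or_lt_of_le (Nat.succ_le_of_lt hij) with he | hlt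
          · exfalso
            have hbq : b = q := by
              apply v.injective; exact Fin.ext (by omega)
            rw [hbq] at hbd
            exact absurd hbd (not_lt.2 h2.le)
          · exact hlt
        have spec := tSwap_spec n j h23 v c d p q hvc (by omega) hvp hvq hcd hpq
        have heq := spec.2 (Or.inr ⟨h1, h2⟩)
        set v' := tSwap n j * v with hv'
        have hconj' : Conj n z v' := tSwap_conj n j hn h23 z v hconj
        have horient' : Orient n z v' := tSwap_orient n j hn h23 z v horient
        have hv'c : (v' c : ℕ) = 2 * j + 2 := by
          rw [hv']; simp only [Perm.mul_apply]; rw [tSwap_val n j h23]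
          split_ifs <;> omega
        have hv'b : (v' b : ℕ) = 2 * i + 1 := by
          rw [hv']; simp only [Perm.mul_apply]; rw [tSwap_val n j h23]
          split_ifs <;> omega
        obtain ⟨v'', hc'', hlt''⟩ := ih ((2 * i + 1) - (2 * j + 2)) (by omega) v'
          hconj' horient' a b c d hab hzab hcd hzcd hac hbd
          (Fin.lt_def.2 (by omega)) (by omega)
        exact ⟨v'', hc'', by omega⟩
    · rcases lt_or_gt_of_ne hqd with h2 | h2
      · -- c < p and q < d : nesting ((j+1)-cycle inside j-cycle); swap and recurse
        have hii : j + 1 < i := by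
          rcases Nat.eq_or_lt_of_le (Nat.succ_le_of_lt hij) with he | hlt
          · exfalso
            have hap : a = p := by
              apply v.injective; exact Fin.ext (by omega)
            rw [hap] at hac
            exact absurd hac (not_lt.2 h1.le)
          · exact hlt
        have spec := tSwap_spec n j h23 v c d p q hvc (by omega) hvp hvq hcd hpq
        have heq := spec.2 (Or.inl ⟨h1, h2⟩)
        set v' := tSwap n j * v with hv'
        have hconj' : Conj n z v' := tSwap_conj n j hn h23 z v hconj
        have horient' : Orient n z v' := tSwap_orient n j hn h23 z v horient
        have hv'c : (v' c : ℕ) = 2 * j + 2 := by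
          rw [hv']; simp only [Perm.mul_apply]; rw [tSwap_val n j h23]
          split_ifs <;> omega
        have hv'b : (v' b : ℕ) = 2 * i + 1 := by
          rw [hv']; simp only [Perm.mul_apply]; rw [tSwap_val n j h23]
          split_ifs <;> omega
        obtain ⟨v'', hc'', hlt''⟩ := ih ((2 * i + 1) - (2 * j + 2)) (by omega) v'
          hconj' horient' a b c d hab hzab hcd hzcd hac hbd
          (Fin.lt_def.2 (by omega)) (by omega)
        exact ⟨v'', hc'', by omega⟩
      · -- c < p and d < q : a closer violation (a,b,p,q) on the same v
        exact ih ((2 * i + 1) - (2 * j + 2)) (by omega) v hconj horient a b p q hab hzab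
          hpq hzpq (lt_trans hac h1) (lt_trans hbd h2) (Fin.lt_def.2 (by omega)) (by omega)



/-- Two positions whose values lie in the same block belong to the same cycle. -/
lemma same_blk (n : ℕ) (hn : Even n) (z w : Perm (Fin n)) (hc : Conj n z w) (x y : Fin n)
    (h : ((w x : Fin n) : ℕ) / 2 = ((w y : Fin n) : ℕ) / 2) : y = x ∨ y = z x := by
  by_cases hxy : (w x : ℕ) = (w y : ℕ)
  · exact Or.inl (w.injective (Fin.ext hxy)).symm
  · right
    apply w.injective
    rw [hc x]
    apply Fin.ext
    rw [onefpf_apply n hn]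
    split_ifs <;> omega

lemma blk_partner (n : ℕ) (hn : Even n) (z w : Perm (Fin n)) (hc : Conj n z w) (x : Fin n) :
    ((w (z x) : Fin n) : ℕ) / 2 = ((w x : Fin n) : ℕ) / 2 := by
  rw [hc x]
  have h1 : ((w x : Fin n) : ℕ) < n := (w x).2
  have h2 : n % 2 = 0 := Nat.even_iff.1 hn
  rw [onefpf_apply n hn]
  split_ifs <;> omega

/-- Find a pair of *adjacent* value blocks of `v` whose cycles occur in opposite
order in `w`, starting from any out-of-order pair. -/
lemma adj_disagree (n : ℕ) (hn : Even n) (z v w : Perm (Fin n))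
    (hcv : Conj n z v) (hov : Orient n z v) (hcw : Conj n z w) :
    ∀ g i j, j < i → i - j = g → 2 * i + 1 < n →
    ∀ P Q : Fin n, (v P : ℕ) = 2 * i → (v Q : ℕ) = 2 * j →
    ((w P : Fin n) : ℕ) / 2 < ((w Q : Fin n) : ℕ) / 2 →
    ∃ k, (2 * k + 3 < n) ∧ ∃ Pk Qk : Fin n, (v Pk : ℕ) = 2 * k + 2 ∧
      (v Qk : ℕ) = 2 * k ∧ ((w Pk : Fin n) : ℕ) / 2 < ((w Qk : Fin n) : ℕ) / 2 := by
  intro g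
  induction g using Nat.strong_induction_on with
  | _ g ih =>
    intro i j hij hg hi P Q hvP hvQ hlt
    rcases Nat.eq_or_lt_of_le (Nat.succ_le_of_lt hij) with he | hlt2
    · -- i = j + 1 : already adjacent
      exact ⟨j, by omega, P, Q, by omega, hvQ, hlt⟩
    · -- compare the cycle at block j+1 with the one at block j
      obtain ⟨E, hvE⟩ : ∃ E : Fin n, (v E : ℕ) = 2 * j + 2 :=
        ⟨v⁻¹ ⟨2 * j + 2, by omega⟩, by rw [Perm.apply_inv_self]⟩
      have hne : ((w E : Fin n) : ℕ) / 2 ≠ ((w Q : Fin n) : ℕ) / 2 := by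
        intro hsame
        rcases same_blk n hn z w hcw E Q hsame with h' | h'
        · rw [h'] at hvQ; omega
        · have hval : (v (z E) : ℕ) = 2 * j + 3 := by
            rw [hcv E, onefpf_apply n hn]
            split_ifs <;> omega
          rw [← h'] at hval
          omega
      rcases lt_or_gt_of_ne hne with h' | h'
      · exact ⟨j, by omega, E, Q, hvE, hvQ, h'⟩
      · exact ih (i - (j + 1)) (by omega) i (j + 1) (by omega) rfl hi P E hvP
          (by omega) (lt_trans hlt h')

lemma start_lt (n : ℕ) (hn : Even n) (z v : Perm (Fin n)) (hc : Conj n z v)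
    (ho : Orient n z v) (x : Fin n) (he : (v x : ℕ) % 2 = 0) : x < z x := by
  rcases lt_trichotomy x (z x) with h | h | h
  · exact h
  · exfalso
    have h1 := hc x
    rw [← h] at h1
    have h2 := congrArg (fun t : Fin n => (t : ℕ)) h1
    rw [onefpf_apply n hn] at h2
    split_ifs at h2 <;> omega
  · exfalso
    have hzz : z x < z (z x) := by rw [z_invol n hn z v hc x]; exact h
    have h1 := ho (z x) hzz
    have h2 := hc x
    have h3 := congrArg (fun t : Fin n => (t : ℕ)) h2
    rw [onefpf_apply n hn] at h3
    split_ifs at h3 <;> omega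

def Dis (n : ℕ) (v w : Perm (Fin n)) : Finset (Fin n × Fin n) :=
  Finset.univ.filter (fun p => p.1 < p.2 ∧ ((v p.2 < v p.1) ↔ ¬(w p.2 < w p.1)))

set_option maxHeartbeats 2000000 in
/-- Any two "good" conjugators have the same inversion number. -/
lemma good_invNum_eq (n : ℕ) (hn : Even n) (z w : Perm (Fin n))
    (hcw : Conj n z w) (how : Orient n z w) (hnw : NoViol n z w) :
    ∀ M v, Conj n z v → Orient n z v → NoViol n z v → (Dis n v w).card = M →
    invNum n v = invNum n w := by
  intro M
  induction M using Nat.strong_induction_on with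
  | _ M ih =>
    intro v hcv hov hnv hM
    rcases Nat.eq_zero_or_pos M with rfl | hpos
    · -- no disagreements: the inversion sets coincide
      have hemp : Dis n v w = ∅ := Finset.card_eq_zero.1 hM
      rw [invNum, invNum]
      congr 1
      ext p
      simp only [Finset.mem_filter, Finset.mem_univ, true_and]
      constructor
      · rintro ⟨h1, h2⟩
        refine ⟨h1, ?_⟩
        by_contra h3
        have hp : p ∈ Dis n v w := by
          simp only [Dis, Finset.mem_filter, Finset.mem_univ, true_and]
          exact ⟨h1, iff_of_true h2 h3⟩
        rw [hemp] at hp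
        exact absurd hp (Finset.notMem_empty p)
      · rintro ⟨h1, h2⟩
        refine ⟨h1, ?_⟩
        by_contra h3
        have hp : p ∈ Dis n v w := by
          simp only [Dis, Finset.mem_filter, Finset.mem_univ, true_and]
          exact ⟨h1, iff_of_false h3 (not_not_intro h2)⟩
        rw [hemp] at hp
        exact absurd hp (Finset.notMem_empty p)
    · -- there is a disagreement pair
      obtain ⟨⟨x, y⟩, hmem⟩ := Finset.card_pos.1 (by omega : 0 < (Dis n v w).card)
      simp only [Dis, Finset.mem_filter, Finset.mem_univ, true_and] at hmem
      obtain ⟨hxy, hdis⟩ := hmem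
      have hvalne : (v x : ℕ) ≠ (v y : ℕ) := fun e =>
        (ne_of_lt hxy) (v.injective (Fin.ext e))
      have hwvalne : (w x : ℕ) ≠ (w y : ℕ) := fun e =>
        (ne_of_lt hxy) (w.injective (Fin.ext e))
      have hblkne : (v x : ℕ) / 2 ≠ (v y : ℕ) / 2 := by
        intro hsame
        rcases same_blk n hn z v hcv x y hsame with h' | h'
        · rw [h'] at hxy; exact lt_irrefl x hxy
        · have hxzx : x < z x := by rw [← h']; exact hxy
          have h1 := hov x hxzx
          have h2 : (v y : ℕ) = (v x : ℕ) + 1 := by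
            rw [h']; exact cycle_block n hn z v hcv x hxzx h1
          have h1w := how x hxzx
          have h2w : (w y : ℕ) = (w x : ℕ) + 1 := by
            rw [h']; exact cycle_block n hn z w hcw x hxzx h1w
          have h3 : ¬(v y < v x) := fun hh => by
            have : (v y : ℕ) < (v x : ℕ) := hh
            omega
          have h4 : ¬(w y < w x) := fun hh => by
            have : (w y : ℕ) < (w x : ℕ) := hh
            omega
          exact h3 (hdis.mpr h4)
      have hwblkne : (w x : ℕ) / 2 ≠ (w y : ℕ) / 2 := by
        intro hsame
        rcases same_blk n hn z w hcw x y hsame with h' | h'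
        · rw [h'] at hxy; exact lt_irrefl x hxy
        · apply hblkne
          rw [h']
          exact (blk_partner n hn z v hcv x).symm
      -- produce a disagreeing pair of blocks with the larger v-block having
      -- smaller w-block
      have hstart : ∀ u : Fin n, ∃ u0 : Fin n, (v u0 : ℕ) = 2 * ((v u : ℕ) / 2) ∧
          (w u0 : ℕ) / 2 = (w u : ℕ) / 2 := by
        intro u
        by_cases hpar : (v u : ℕ) % 2 = 0
        · exact ⟨u, by omega, rfl⟩
        · refine ⟨z u, ?_, blk_partner n hn z w hcw u⟩
          have h1 := hcv u
          have h2 := congrArg (fun t : Fin n => (t : ℕ)) h1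
          rw [onefpf_apply n hn] at h2
          split_ifs at h2 <;> omega
      obtain ⟨x0, hx0v, hx0w⟩ := hstart x
      obtain ⟨y0, hy0v, hy0w⟩ := hstart y
      have hkey : ∃ P Q : Fin n, (v Q : ℕ) / 2 < (v P : ℕ) / 2 ∧
          (v P : ℕ) = 2 * ((v P : ℕ) / 2) ∧ (v Q : ℕ) = 2 * ((v Q : ℕ) / 2) ∧
          (w P : ℕ) / 2 < (w Q : ℕ) / 2 := by
        rcases lt_or_gt_of_ne hblkne with hv1 | hv1
        · -- v-block of x smaller; disagreement forces w y < w x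
          have hnotinv : ¬(v y < v x) := fun hh => by
            have : (v y : ℕ) < (v x : ℕ) := hh
            omega
          have hw1 : w y < w x := by
            by_contra hh
            exact hnotinv (hdis.mpr hh)
          have hw1v : (w y : ℕ) < (w x : ℕ) := hw1
          refine ⟨y0, x0, by omega, by omega, by omega, by omega⟩
        · -- v-block of y smaller; disagreement forces ¬(w y < w x)
          have hinv : v y < v x := Fin.lt_def.2 (by omega)
          have hw1 : ¬(w y < w x) := hdis.mp hinv
          have hw1v : (w x : ℕ) < (w y : ℕ) := by
            rcases lt_or_gt_of_ne hwvalne with h' | h'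
            · exact h'
            · exact absurd (Fin.lt_def.2 h') hw1
          refine ⟨x0, y0, by omega, by omega, by omega, by omega⟩
      obtain ⟨P, Q, hPQ, hPev, hQev, hwPQ⟩ := hkey
      have hPlt : P < z P := start_lt n hn z v hcv hov P (by omega)
      have hPz : (v (z P) : ℕ) = (v P : ℕ) + 1 :=
        cycle_block n hn z v hcv P hPlt (by omega)
      have hibound : 2 * ((v P : ℕ) / 2) + 1 < n := by
        have := (v (z P)).2
        omega
      obtain ⟨k, hk3, Pk, Qk, hvPk, hvQk, hwk⟩ :=
        adj_disagree n hn z v w hcv hov hcw ((v P : ℕ) / 2 - (v Q : ℕ) / 2)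
          ((v P : ℕ) / 2) ((v Q : ℕ) / 2) hPQ rfl hibound P Q (by omega) (by omega) hwPQ
      -- set up the nesting swap at blocks k, k+1
      have hq1lt : Qk < z Qk := start_lt n hn z v hcv hov Qk (by omega)
      have hp1lt : Pk < z Pk := start_lt n hn z v hcv hov Pk (by omega)
      have hvq2 : (v (z Qk) : ℕ) = 2 * k + 1 := by
        have := cycle_block n hn z v hcv Qk hq1lt (by omega)
        omega
      have hvp2 : (v (z Pk) : ℕ) = 2 * k + 3 := by
        have := cycle_block n hn z v hcv Pk hp1lt (by omega)
        omega
      have hwq2 : (w (z Qk) : ℕ) / 2 = (w Qk : ℕ) / 2 := blk_partner n hn z w hcw Qk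
      have hwp2 : (w (z Pk) : ℕ) / 2 = (w Pk : ℕ) / 2 := blk_partner n hn z w hcw Pk
      have hn1 : ¬(Pk < Qk ∧ z Pk < z Qk) := by
        rintro ⟨hh1, hh2⟩
        have := hnv Pk (z Pk) Qk (z Qk) hp1lt rfl hq1lt rfl hh1 hh2
        have hvv : (v (z Pk) : ℕ) < (v Qk : ℕ) := this
        omega
      have hn2 : ¬(Qk < Pk ∧ z Qk < z Pk) := by
        rintro ⟨hh1, hh2⟩
        have := hnw Qk (z Qk) Pk (z Pk) hq1lt rfl hp1lt rfl hh1 hh2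
        have hvv : (w (z Qk) : ℕ) < (w Pk : ℕ) := this
        omega
      have hd1 : Pk ≠ Qk := fun e => by rw [e] at hvPk; omega
      have hd2 : z Pk ≠ z Qk := fun e => by rw [e] at hvp2; omega
      have hcases : (Qk < Pk ∧ z Pk < z Qk) ∨ (Pk < Qk ∧ z Qk < z Pk) := by
        rcases lt_or_gt_of_ne hd1 with h1 | h1
        · rcases lt_or_gt_of_ne hd2 with h2 | h2
          · exact absurd ⟨h1, h2⟩ hn1
          · exact Or.inr ⟨h1, h2⟩
        · rcases lt_or_gt_of_ne hd2 with h2 | h2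
          · exact Or.inl ⟨h1, h2⟩
          · exact absurd ⟨h1, h2⟩ hn2
      have spec := tSwap_spec n k hk3 v Qk (z Qk) Pk (z Pk) hvQk hvq2 hvPk hvp2
        hq1lt hp1lt
      have heq := spec.2 hcases
      have hconj' : Conj n z (tSwap n k * v) := tSwap_conj n k hn hk3 z v hcv
      have horient' : Orient n z (tSwap n k * v) := tSwap_orient n k hn hk3 z v hov
      have hnoviol' : NoViol n z (tSwap n k * v) := by
        intro a b c d hab hzab hcd hzcd hac hbd
        have hvbc : v b < v c := hnv a b c d hab hzab hcd hzcd hac hbd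
        by_cases hcross : (v b : ℕ) / 2 = k ∧ (v c : ℕ) / 2 = k + 1
        · exfalso
          have haz : a < z a := by rw [hzab]; exact hab
          have hcz : c < z c := by rw [hzcd]; exact hcd
          have hea := hov a haz
          have heb : (v b : ℕ) = (v a : ℕ) + 1 := by
            rw [← hzab]; exact cycle_block n hn z v hcv a haz hea
          have hec := hov c hcz
          have hed : (v d : ℕ) = (v c : ℕ) + 1 := by
            rw [← hzcd]; exact cycle_block n hn z v hcv c hcz hec
          have hbq2 : b = z Qk := v.injective (Fin.ext (by omega))
          have hcp1 : c = Pk := v.injective (Fin.ext (by omega))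
          have haq1 : a = Qk := v.injective (Fin.ext (by omega))
          have hdp2 : d = z Pk := v.injective (Fin.ext (by omega))
          rw [haq1, hcp1] at hac
          rw [hbq2, hdp2] at hbd
          rcases hcases with ⟨hh1, hh2⟩ | ⟨hh1, hh2⟩
          · exact absurd hbd (not_lt.2 hh2.le)
          · exact absurd hac (not_lt.2 hh1.le)
        · show (tSwap n k * v) b < (tSwap n k * v) c
          simp only [Perm.mul_apply]
          exact tSwap_lt_of_lt n k hk3 (v b) (v c) hvbc hcross
      -- the disagreement measure strictly decreases
      have hsub : Dis n (tSwap n k * v) w ⊆ Dis n v w := by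
        rintro ⟨x', y'⟩ hmem'
        simp only [Dis, Finset.mem_filter, Finset.mem_univ, true_and] at hmem' ⊢
        simp only [Perm.mul_apply] at hmem' ⊢
        obtain ⟨hxy', hd'⟩ := hmem'
        have hvalne' : (v x' : ℕ) ≠ (v y' : ℕ) := fun e =>
          (ne_of_lt hxy') (v.injective (Fin.ext e))
        have hwblk : ∀ u : Fin n, (v u : ℕ) / 2 = k → (w u : ℕ) / 2 = (w Qk : ℕ) / 2 := by
          intro u hu
          rcases (by omega : (v u : ℕ) = 2 * k ∨ (v u : ℕ) = 2 * k + 1) with e | e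
          · have : u = Qk := v.injective (Fin.ext (by omega))
            rw [this]
          · have : u = z Qk := v.injective (Fin.ext (by omega))
            rw [this, hwq2]
        have hwblk' : ∀ u : Fin n, (v u : ℕ) / 2 = k + 1 →
            (w u : ℕ) / 2 = (w Pk : ℕ) / 2 := by
          intro u hu
          rcases (by omega : (v u : ℕ) = 2 * k + 2 ∨ (v u : ℕ) = 2 * k + 3) with e | e
          · have : u = Pk := v.injective (Fin.ext (by omega))
            rw [this]
          · have : u = z Pk := v.injective (Fin.ext (by omega))
            rw [this, hwp2]
        refine ⟨hxy', ?_⟩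
        by_cases hcr1 : (v x' : ℕ) / 2 = k ∧ (v y' : ℕ) / 2 = k + 1
        · exfalso
          have hv'x : ((tSwap n k) (v x') : ℕ) = (v x' : ℕ) + 2 := by
            rw [tSwap_val n k hk3]
            split_ifs <;> omega
          have hv'y : ((tSwap n k) (v y') : ℕ) = (v y' : ℕ) - 2 := by
            rw [tSwap_val n k hk3]
            split_ifs <;> omega
          have hL : (tSwap n k) (v y') < (tSwap n k) (v x') := Fin.lt_def.2 (by omega)
          have hwx := hwblk x' hcr1.1
          have hwy := hwblk' y' hcr1.2
          have hR : w y' < w x' := Fin.lt_def.2 (by omega)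
          exact (hd'.mp hL) hR
        · by_cases hcr2 : (v x' : ℕ) / 2 = k + 1 ∧ (v y' : ℕ) / 2 = k
          · exfalso
            have hv'x : ((tSwap n k) (v x') : ℕ) = (v x' : ℕ) - 2 := by
              rw [tSwap_val n k hk3]
              split_ifs <;> omega
            have hv'y : ((tSwap n k) (v y') : ℕ) = (v y' : ℕ) + 2 := by
              rw [tSwap_val n k hk3]
              split_ifs <;> omega
            have hL : ¬((tSwap n k) (v y') < (tSwap n k) (v x')) := fun hh => by
              have : ((tSwap n k) (v y') : ℕ) < ((tSwap n k) (v x') : ℕ) := hh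
              omega
            have hwx := hwblk' x' hcr2.1
            have hwy := hwblk y' hcr2.2
            have hR : w x' < w y' := Fin.lt_def.2 (by omega)
            exact hL (hd'.mpr (fun hh => by
              have h1 : (w y' : ℕ) < (w x' : ℕ) := hh
              have h2 : (w x' : ℕ) < (w y' : ℕ) := hR
              omega))
          · have hiff : ((tSwap n k) (v y') < (tSwap n k) (v x')) ↔ (v y' < v x') := by
              constructor
              · intro hh
                by_contra hh2
                have hxv : v x' < v y' := by
                  rcases lt_or_gt_of_ne hvalne' with h' | h'
                  · exact Fin.lt_def.2 h'
                  · exact absurd (Fin.lt_def.2 h') hh2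
                have := tSwap_lt_of_lt n k hk3 (v x') (v y') hxv
                  (fun ⟨e1, e2⟩ => hcr1 ⟨e1, e2⟩)
                exact absurd hh (asymm this)
              · intro hh
                exact tSwap_lt_of_lt n k hk3 (v y') (v x') hh
                  (fun ⟨e1, e2⟩ => hcr2 ⟨e2, e1⟩)
            rw [← hiff]
            exact hd'
      have hwlt : w Pk < w Qk := Fin.lt_def.2 (by omega)
      have hwit : ∃ r : Fin n × Fin n, r ∈ Dis n v w ∧ r ∉ Dis n (tSwap n k * v) w := by
        have hv'q1 : ((tSwap n k) (v Qk) : ℕ) = 2 * k + 2 := by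
          rw [tSwap_val n k hk3]
          split_ifs <;> omega
        have hv'p1 : ((tSwap n k) (v Pk) : ℕ) = 2 * k := by
          rw [tSwap_val n k hk3]
          split_ifs <;> omega
        rcases hcases with ⟨hh1, hh2⟩ | ⟨hh1, hh2⟩
        · refine ⟨(Qk, Pk), ?_, ?_⟩
          · simp only [Dis, Finset.mem_filter, Finset.mem_univ, true_and]
            refine ⟨hh1, iff_of_false ?_ (not_not_intro hwlt)⟩
            intro hh
            have : (v Pk : ℕ) < (v Qk : ℕ) := hh
            omega
          · simp only [Dis, Finset.mem_filter, Finset.mem_univ, true_and, not_and]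
            simp only [Perm.mul_apply]
            intro _
            rw [iff_iff_implies_and_implies, not_and_or]
            left
            intro hcon
            exact (hcon (Fin.lt_def.2 (by omega))) hwlt
        · refine ⟨(Pk, Qk), ?_, ?_⟩
          · simp only [Dis, Finset.mem_filter, Finset.mem_univ, true_and]
            refine ⟨hh1, iff_of_true (Fin.lt_def.2 (by omega)) ?_⟩
            intro hh
            have h1 : (w Qk : ℕ) < (w Pk : ℕ) := hh
            have h2 : (w Pk : ℕ) < (w Qk : ℕ) := hwlt
            omega
          · simp only [Dis, Finset.mem_filter, Finset.mem_univ, true_and, not_and]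
            simp only [Perm.mul_apply]
            intro _
            rw [iff_iff_implies_and_implies, not_and_or]
            right
            intro hcon
            have h1 := hcon (fun hh => absurd hh (not_lt.2 hwlt.le))
            have : ((tSwap n k) (v Qk) : ℕ) < ((tSwap n k) (v Pk) : ℕ) := h1
            omega
      obtain ⟨r, hrin, hrout⟩ := hwit
      have hss : Dis n (tSwap n k * v) w ⊂ Dis n v w :=
        (Finset.ssubset_iff_of_subset hsub).2 ⟨r, hrin, hrout⟩
      have hcard : (Dis n (tSwap n k * v) w).card < M := by
        rw [← hM]
        exact Finset.card_lt_card hss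
      calc invNum n v = invNum n (tSwap n k * v) := heq.symm
      _ = invNum n w := ih _ hcard (tSwap n k * v) hconj' horient' hnoviol' rfl


end FpfAux

open FpfAux in
/-- For `n` even and `z` a fixed-point-free involution, `w` is an fpf-atom of `z`
iff (1) each cycle `a < b = z(a)` satisfies `w(a) = 2i-1`, `w(b) = 2i` for some `i`
(in `1`-indexed terms), and (2) for cycles `a < b = z(a)` and `c < d = z(c)` with
`a < c` and `b < d` one has `w(b) < w(c)`. -/
theorem fpf_atom_iff (n : ℕ) (hn : Even n) (z : Equiv.Perm (Fin n))
    (hz : z⁻¹ = z) (hfpf : ∀ i : Fin n, z i ≠ i) (w : Equiv.Perm (Fin n)) :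
    IsFpfAtomOf n w z ↔
      ((∀ a b : Fin n, a < b → z a = b →
          ∃ i : ℕ, (w a : ℕ) = 2 * i ∧ (w b : ℕ) = 2 * i + 1) ∧
       (∀ a b c d : Fin n, a < b → z a = b → c < d → z c = d →
          a < c → b < d → w b < w c)) := by
  classical
  have hzz : ∀ x : Fin n, z (z x) = x := by
    intro x
    have h' : z (z x) = z⁻¹ (z x) := by rw [hz]
    rw [h', Perm.inv_apply_self]
  constructor
  · rintro ⟨hconj0, hmin⟩
    have hcw : Conj n z w := (conj_iff n z w).1 hconj0
    have h1 : ∀ a b : Fin n, a < b → z a = b →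
        ∃ i : ℕ, (w a : ℕ) = 2 * i ∧ (w b : ℕ) = 2 * i + 1 := by
      intro a b hab hzab
      have haz : a < z a := by rw [hzab]; exact hab
      by_cases hpar : (w a : ℕ) % 2 = 0
      · refine ⟨(w a : ℕ) / 2, by omega, ?_⟩
        rw [← hzab]
        have := cycle_block n hn z w hcw a haz hpar
        omega
      · exfalso
        obtain ⟨v', hcv', hlt⟩ := move_orient n hn z w hcw a haz (by omega)
        have hle := hmin v' ((conj_iff n z v').2 hcv')
        rw [len_eq_invNum, len_eq_invNum] at hle
        omega
    have how : Orient n z w := by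
      intro x hx
      obtain ⟨i, hi1, hi2⟩ := h1 x (z x) hx rfl
      omega
    refine ⟨h1, ?_⟩
    intro a b c d hab hzab hcd hzcd hac hbd
    by_contra hviol
    have hbc : b ≠ c := by
      intro e
      have h1' : z b = a := by rw [← hzab]; exact hzz a
      rw [e, hzcd] at h1'
      have had : a < d := lt_trans hac hcd
      rw [h1'] at had
      exact lt_irrefl a had
    have hwbc : w b ≠ w c := fun e => hbc (w.injective e)
    have hwcb : w c < w b := by
      rcases lt_or_gt_of_ne hwbc with h' | h'
      · exact absurd h' hviol
      · exact h'
    obtain ⟨v', hcv', hlt⟩ := move_violation n hn z ((w b : ℕ) - (w c : ℕ)) w hcw how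
      a b c d hab hzab hcd hzcd hac hbd hwcb rfl
    have hle := hmin v' ((conj_iff n z v').2 hcv')
    rw [len_eq_invNum, len_eq_invNum] at hle
    omega
  · rintro ⟨h1, h2⟩
    have hcw : Conj n z w := by
      intro x
      rcases lt_trichotomy x (z x) with h | h | h
      · obtain ⟨i, hi1, hi2⟩ := h1 x (z x) h rfl
        apply Fin.ext
        rw [onefpf_apply n hn]
        split_ifs <;> omega
      · exact absurd h.symm (hfpf x)
      · obtain ⟨i, hi1, hi2⟩ := h1 (z x) x h (hzz x)
        apply Fin.ext
        rw [onefpf_apply n hn]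
        split_ifs <;> omega
    have how : Orient n z w := by
      intro x hx
      obtain ⟨i, hi1, hi2⟩ := h1 x (z x) hx rfl
      omega
    refine ⟨(conj_iff n z w).2 hcw, ?_⟩
    intro v hv
    have hcv : Conj n z v := (conj_iff n z v).1 hv
    rw [len_eq_invNum, len_eq_invNum]
    have main : ∀ N (u : Equiv.Perm (Fin n)), Conj n z u → invNum n u = N →
        invNum n w ≤ invNum n u := by
      intro N
      induction N using Nat.strong_induction_on with
      | _ N ih =>
        intro u hcu hN
        by_cases hou : Orient n z u
        · by_cases hnu : NoViol n z u
          · have := good_invNum_eq n hn z w hcw how h2 (Dis n u w).card u hcu hou hnu rfl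
            omega
          · rw [NoViol] at hnu
            push_neg at hnu
            obtain ⟨a, b, c, d, hab, hzab, hcd, hzcd, hac, hbd, hviol⟩ := hnu
            have hbc : b ≠ c := by
              intro e
              have h1' : z b = a := by rw [← hzab]; exact hzz a
              rw [e, hzcd] at h1'
              have had : a < d := lt_trans hac hcd
              rw [h1'] at had
              exact lt_irrefl a had
            have hucb : u c < u b := by
              rcases lt_or_gt_of_ne (fun e => hbc (u.injective e) : u b ≠ u c) with h' | h'
              · exact absurd h' (not_lt.2 hviol)
              · exact h'
            obtain ⟨v', hcv', hlt⟩ := move_violation n hn z ((u b : ℕ) - (u c : ℕ)) u hcu hou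
              a b c d hab hzab hcd hzcd hac hbd hucb rfl
            have := ih (invNum n v') (by omega) v' hcv' rfl
            omega
        · rw [Orient] at hou
          push_neg at hou
          obtain ⟨x, hx, hodd⟩ := hou
          obtain ⟨v', hcv', hlt⟩ := move_orient n hn z u hcu x hx (by omega)
          have := ih (invNum n v') (by omega) v' hcv' rfl
          omega
    exact main (invNum n v) v hcv rfl
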